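/- arXiv:1604.03364 — 5 statements merged into one kernel-verified Lean document; each statement's English description precedes it below -/
import Mathlib

section
/- Let $x^\dagger\in\ell^1\setminus\ell^0$ (i.e., $x^\dagger$ has infinitely many nonzero components) and let $\eta>0$. If $\xi\in\partial\mathcal{R}_\eta(x^\dagger)\subset\ell^\infty$ is any subgradient of $\mathcal{R}_\eta(x)=\eta\|x\|_{\ell^1}+\tfrac12\|x\|_{\ell^2}^2$ at $x^\dagger$, then $\xi\notin c_0$; in particular, $\xi$ cannot lie in the range of $A^*$ for any bounded linear $A:\ell^2\to Y$. -/
/-! Every sequence in `ℓ²` (in particular every `A* v`) tends to `0`, and so does `x`,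
being in `ℓ¹`. If `ξ` tended to `0` as well, so would `ζ = (ξ - x) / η`; but `|ζ k| = 1`
at each of the infinitely many `k` with `x k ≠ 0`. -/

open Filter Topology

theorem Memℓp.tendsto_norm_cofinite_zero {α : Type*} {E : α → Type*}
    [∀ i, NormedAddCommGroup (E i)] {p : ENNReal} {f : ∀ i, E i} (hf : Memℓp f p)
    (hp : p ≠ ⊤) : Tendsto (fun i => ‖f i‖) cofinite (𝓝 0) := by
  rcases p.toReal_nonneg.eq_or_lt with hp0 | hp0
  · have hf0 : Memℓp f 0 := by
      rwa [(ENNReal.toReal_eq_zero_iff p).1 hp0.symm |>.resolve_right hp] at hf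
    refine tendsto_const_nhds.congr' ?_
    filter_upwards [(memℓp_zero_iff.1 hf0).eventually_cofinite_notMem] with i hi
    simp_all
  · have hpow := ((hf.summable hp0).tendsto_cofinite_zero).rpow_const (p := p.toReal⁻¹)
      (Or.inr (inv_nonneg.2 hp0.le))
    rw [Real.zero_rpow (inv_ne_zero hp0.ne')] at hpow
    exact hpow.congr fun i => Real.rpow_rpow_inv (norm_nonneg _) hp0.ne'

theorem Memℓp.tendsto_atTop_zero {E : Type*} [NormedAddCommGroup E] {p : ENNReal} {f : ℕ → E}
    (hf : Memℓp f p) (hp : p ≠ ⊤) : Tendsto f atTop (𝓝 0) :=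
  tendsto_zero_iff_norm_tendsto_zero.2 <| Nat.cofinite_eq_atTop ▸ hf.tendsto_norm_cofinite_zero hp

theorem not_tendsto_zero_of_frequently_le_norm {α E : Type*} [SeminormedAddCommGroup E]
    {l : Filter α} {f : α → E} {c : ℝ} (hc : 0 < c) (hf : ∃ᶠ i in l, c ≤ ‖f i‖) :
    ¬ Tendsto f l (𝓝 0) := fun h =>
  hf <| (tendsto_zero_iff_norm_tendsto_zero.1 h).eventually_lt_const hc |>.mono
    fun _ hi => hi.not_ge

theorem abs_eq_one_of_ne_zero_of_sign {a z : ℝ} (hpos : 0 < a → z = 1) (hneg : a < 0 → z = -1)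
    (ha : a ≠ 0) : |z| = 1 := by
  rcases ha.lt_or_gt with h | h <;> simp [hneg, hpos, h]

/-- Let `x† ∈ ℓ¹ \ ℓ⁰` (infinitely many nonzero components) and `η > 0`.
Any subgradient `ξ ∈ ∂R_η(x†)` of `R_η(x) = η‖x‖₁ + ½‖x‖₂²`, i.e. any sequence of the
form `ξ_k = η ζ_k + x†_k` with `ζ_k = sgn(x†_k)` when `x†_k ≠ 0` and `ζ_k ∈ [-1,1]`
otherwise, does not belong to `c₀`; in particular it is not of the form `A* v` for any
bounded linear `A : ℓ² → Y` into a Hilbert space `Y` and `v ∈ Y`. -/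
theorem subgradient_elastic_net_not_in_c0
    (x : ℕ → ℝ) (hx1 : Memℓp x 1) (hx0 : {k : ℕ | x k ≠ 0}.Infinite)
    (η : ℝ) (hη : 0 < η) (ξ ζ : ℕ → ℝ)
    (hζ : ∀ k, (0 < x k → ζ k = 1) ∧ (x k < 0 → ζ k = -1) ∧ ζ k ∈ Set.Icc (-1 : ℝ) 1)
    (hξ : ∀ k, ξ k = η * ζ k + x k) :
    ¬ Tendsto ξ atTop (nhds 0) ∧
      ∀ (Y : Type) (_ : NormedAddCommGroup Y) (_ : InnerProductSpace ℝ Y)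
        (_ : CompleteSpace Y) (A : lp (fun _ : ℕ => ℝ) 2 →L[ℝ] Y) (v : Y),
        ξ ≠ (ContinuousLinearMap.adjoint A v : ∀ _ : ℕ, ℝ) := by
  have hx : Tendsto x atTop (𝓝 0) := hx1.tendsto_atTop_zero ENNReal.one_ne_top
  have hζ_one : ∃ᶠ k in atTop, 1 ≤ ‖ζ k‖ :=
    (Nat.frequently_atTop_iff_infinite.2 hx0).mono fun k hk =>
      (abs_eq_one_of_ne_zero_of_sign (hζ k).1 (hζ k).2.1 hk).ge
  have hζ_eq : ζ = fun k => (ξ k - x k) / η := by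
    funext k
    rw [hξ k]
    field_simp
    ring
  have hξ_not : ¬ Tendsto ξ atTop (𝓝 0) := fun hξ0 => by
    refine not_tendsto_zero_of_frequently_le_norm one_pos hζ_one ?_
    simpa [hζ_eq] using (hξ0.sub hx).div_const η
  refine ⟨hξ_not, fun Y _ _ _ A v heq => hξ_not ?_⟩
  rw [heq]
  exact (ContinuousLinearMap.adjoint A v).2.tendsto_atTop_zero ENNReal.ofNat_ne_top
end

section
/- Let $x^\dagger\in\ell^1$ have infinitely many nonzero components, $\eta>0$, and $\xi^\dagger\in\partial\mathcal{R}_\eta(x^\dagger)$. Then $\|\xi^\dagger-w\|_{\ell^\infty}\ge\eta$ for every $w\in c_0$; in particular, the distance function $d_{\xi^\dagger}(R)=\inf_{\|v\|_Y\le R}\|\xi^\dagger-A^*v\|_{\ell^\infty}$ does not tend to zero as $R\to\infty$. -/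
open Filter Topology

/-! Write `ξ - w = η ζ + (x - w)`. For `x ∈ ℓ¹` and `w ∈ c₀` the perturbation `x - w` tends to
zero, while `|η ζ k| ≤ η` everywhere with equality on the infinite support of `x`. Hence
`|ξ k - w k|` is bounded and comes arbitrarily close to `η`, so its supremum is at least `η`.
For `w = A* v ∈ ℓ² ⊆ c₀` this bounds every value of the distance function below by `η > 0`. -/

theorem Memℓp.tendsto_cofinite_zero {α E : Type*} [NormedAddCommGroup E] {f : α → E}
    {p : ENNReal} (hf : Memℓp f p) (hp : p ≠ ⊤) : Tendsto f cofinite (𝓝 0) := by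
  rcases p.trichotomy with rfl | rfl | hp0
  · refine tendsto_nhds_of_eventually_eq ?_
    filter_upwards [(memℓp_zero_iff.mp hf).eventually_cofinite_notMem] with i hi
    simpa using hi
  · exact absurd rfl hp
  · have hpow : Tendsto (fun t : ℝ => t ^ p.toReal⁻¹) (𝓝 0) (𝓝 0) := by
      simpa [Real.zero_rpow (inv_pos.2 hp0).ne'] using
        (Real.continuousAt_rpow_const 0 _ (Or.inr (inv_pos.2 hp0).le)).tendsto
    rw [tendsto_zero_iff_norm_tendsto_zero]
    refine (hpow.comp (hf.summable hp0).tendsto_cofinite_zero).congr fun i => ?_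
    exact Real.rpow_rpow_inv (norm_nonneg _) hp0.ne'

section PerturbedSequence

variable {a u : ℕ → ℝ} {η : ℝ}

theorem exists_lt_abs_add_of_frequently_le (ha : ∃ᶠ k in atTop, η ≤ |a k|)
    (hu : Tendsto u atTop (𝓝 0)) {ε : ℝ} (hε : 0 < ε) : ∃ k, η - ε < |a k + u k| := by
  have hsmall : ∀ᶠ k in atTop, |u k| < ε :=
    ((tendsto_zero_iff_abs_tendsto_zero u).mp hu).eventually (gt_mem_nhds hε)
  obtain ⟨k, hak, huk⟩ := (ha.and_eventually hsmall).exists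
  exact ⟨k, by linarith [abs_sub_abs_le_abs_add (a k) (u k)]⟩

theorem le_iSup_abs_add_of_frequently_le (ha_le : ∀ k, |a k| ≤ η)
    (ha : ∃ᶠ k in atTop, η ≤ |a k|) (hu : Tendsto u atTop (𝓝 0)) :
    η ≤ ⨆ k, |a k + u k| := by
  obtain ⟨C, hC⟩ := hu.abs.bddAbove_range
  have hbdd : BddAbove (Set.range fun k => |a k + u k|) := by
    refine ⟨η + C, ?_⟩
    rintro _ ⟨k, rfl⟩
    linarith [abs_add_le (a k) (u k), ha_le k, hC ⟨k, rfl⟩]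
  refine le_of_forall_sub_le fun ε hε => ?_
  obtain ⟨k, hk⟩ := exists_lt_abs_add_of_frequently_le ha hu hε
  exact hk.le.trans (le_ciSup hbdd k)

end PerturbedSequence

theorem abs_eq_one_of_eq_sign_of_ne_zero {t s : ℝ} (hpos : 0 < t → s = 1)
    (hneg : t < 0 → s = -1) (ht : t ≠ 0) : |s| = 1 := by
  rcases ht.lt_or_gt with h | h
  · simp [hneg h]
  · simp [hpos h]

/-- Let `x† ∈ ℓ¹` have infinitely many nonzero components, `η > 0`, and
`ξ† ∈ ∂R_η(x†)`. Then `‖ξ† - w‖_∞ ≥ η` for every `w ∈ c₀` (in the form: for every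
`ε > 0` some component of `ξ† - w` exceeds `η - ε`); in particular, the distance
function `d_{ξ†}(R) = inf_{‖v‖_Y ≤ R} ‖ξ† - A* v‖_∞` does not tend to zero as
`R → ∞`. -/
theorem subgradient_dist_to_c0_ge_eta
    {Y : Type*} [NormedAddCommGroup Y] [InnerProductSpace ℝ Y] [CompleteSpace Y]
    (A : lp (fun _ : ℕ => ℝ) 2 →L[ℝ] Y)
    (x : ℕ → ℝ) (hx1 : Memℓp x 1) (hx0 : {k : ℕ | x k ≠ 0}.Infinite)
    (η : ℝ) (hη : 0 < η) (ξ ζ : ℕ → ℝ)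
    (hζ : ∀ k, (0 < x k → ζ k = 1) ∧ (x k < 0 → ζ k = -1) ∧ ζ k ∈ Set.Icc (-1 : ℝ) 1)
    (hξ : ∀ k, ξ k = η * ζ k + x k) :
    (∀ w : ℕ → ℝ, Tendsto w atTop (nhds 0) →
        ∀ ε > 0, ∃ k, η - ε < |ξ k - w k|) ∧
      ¬ Tendsto
          (fun R : ℝ => sInf {s : ℝ | ∃ v : Y, ‖v‖ ≤ R ∧
              s = ⨆ k : ℕ, |ξ k - (ContinuousLinearMap.adjoint A v : ∀ _ : ℕ, ℝ) k|})
          atTop (nhds 0) := by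
  have hx : Tendsto x atTop (𝓝 0) :=
    Nat.cofinite_eq_atTop ▸ hx1.tendsto_cofinite_zero ENNReal.one_ne_top
  have ha_le : ∀ k, |η * ζ k| ≤ η := fun k => by
    rw [abs_mul, abs_of_pos hη]
    exact mul_le_of_le_one_right hη.le (abs_le.2 (hζ k).2.2)
  have ha_freq : ∃ᶠ k in atTop, η ≤ |η * ζ k| :=
    (Nat.frequently_atTop_iff_infinite.2 hx0).mono fun k hk => by
      rw [abs_mul, abs_of_pos hη,
        abs_eq_one_of_eq_sign_of_ne_zero (hζ k).1 (hζ k).2.1 hk, mul_one]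
  have hsplit : ∀ (w : ℕ → ℝ) k, ξ k - w k = η * ζ k + (x k - w k) := fun w k => by
    rw [hξ]; ring
  have hxw : ∀ w : ℕ → ℝ, Tendsto w atTop (𝓝 0) → Tendsto (fun k => x k - w k) atTop (𝓝 0) :=
    fun w hw => by simpa using hx.sub hw
  refine ⟨fun w hw ε hε => ?_, fun hd => ?_⟩
  · simpa only [hsplit] using exists_lt_abs_add_of_frequently_le ha_freq (hxw w hw) hε
  -- `R ≥ 0` keeps the set nonempty (`v = 0`); otherwise its `sInf` is the junk value `0`.
  have hd_ge : ∀ R : ℝ, 0 ≤ R → η ≤ sInf {s : ℝ | ∃ v : Y, ‖v‖ ≤ R ∧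
      s = ⨆ k : ℕ, |ξ k - (ContinuousLinearMap.adjoint A v : ∀ _ : ℕ, ℝ) k|} := by
    refine fun R hR => le_csInf ⟨_, 0, by simpa using hR, rfl⟩ ?_
    rintro s ⟨v, -, rfl⟩
    have hw := Nat.cofinite_eq_atTop ▸
      (lp.memℓp (ContinuousLinearMap.adjoint A v)).tendsto_cofinite_zero ENNReal.ofNat_ne_top
    simpa only [hsplit] using le_iSup_abs_add_of_frequently_le ha_le ha_freq (hxw _ hw)
  exact hη.not_ge (ge_of_tendsto hd ((eventually_ge_atTop 0).mono hd_ge))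
end

section
/- Suppose the variational inequality $\lambda E(x,x^\dagger)\le\mathcal{R}(x)-\mathcal{R}(x^\dagger)+C\,g(\|A(x-x^\dagger)\|_Y)$ holds for all $x\in\mathrm{dom}(\mathcal{R})$ with a concave index function $g$, constants $0<\lambda\le1$, $C>0$, and nonnegative error measure $E$. If $x_\gamma^\delta$ minimizes $T_\gamma^\delta(x)=\tfrac12\|Ax-y^\delta\|_Y^2+\gamma\mathcal{R}(x)$ with noisy data satisfying $\|y^\delta-Ax^\dagger\|_Y\le\delta$, and the regularization parameter satisfies the two-sided discrepancy principle $\tau_1\delta\le\|Ax_\gamma^\delta-y^\delta\|_Y\le\tau_2\delta$ with $1\le\tau_1\le\tau_2$, then $\lambda E(x_\gamma^\delta,x^\dagger)\le C(\tau_2+1)\,g(\delta)$. -/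
noncomputable section

lemma concave_scale (g : ℝ → ℝ) (hg0 : g 0 = 0)
    (hgconc : ConcaveOn ℝ (Set.Ici (0 : ℝ)) g)
    {c t : ℝ} (hc : 1 ≤ c) (ht : 0 ≤ t) : g (c * t) ≤ c * g t := by
  have hc0 : 0 < c := lt_of_lt_of_le one_pos hc
  have h1 : (0:ℝ) ≤ 1 - 1/c := by
    have : 1/c ≤ 1 := by
      rw [div_le_one hc0]; exact hc
    linarith
  have h2 : (0:ℝ) ≤ 1/c := by positivity
  have key := hgconc.2 (Set.mem_Ici.2 le_rfl) (Set.mem_Ici.2 (by positivity : (0:ℝ) ≤ c * t))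
    h1 h2 (by ring)
  simp only [smul_eq_mul, mul_zero, zero_add, hg0, mul_zero, add_zero] at key
  have heq : 1/c * (c * t) = t := by field_simp
  rw [heq] at key
  have := mul_le_mul_of_nonneg_left key (le_of_lt hc0)
  calc g (c * t) = c * (1/c * g (c*t)) := by field_simp
    _ ≤ c * g t := this

/-- Convergence rate under a variational inequality and the two-sided
discrepancy principle. If the variational inequality
`λ E(x, x†) ≤ R(x) - R(x†) + C g(‖A(x - x†)‖)` holds for all `x` with a concave index
function `g`, `0 < λ ≤ 1`, `C > 0`, nonnegative error measure `E`, the regularized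
solution `x_γ^δ` minimizes the Tikhonov functional for noisy data `‖y^δ - A x†‖ ≤ δ`,
and `τ₁ δ ≤ ‖A x_γ^δ - y^δ‖ ≤ τ₂ δ` with `1 ≤ τ₁ ≤ τ₂`, then
`λ E(x_γ^δ, x†) ≤ C (τ₂ + 1) g(δ)`. -/
theorem rate_two_sided_discrepancy
    {Z Y : Type*} [NormedAddCommGroup Z] [InnerProductSpace ℝ Z] [CompleteSpace Z]
    [NormedAddCommGroup Y] [InnerProductSpace ℝ Y] [CompleteSpace Y]
    (A : Z →L[ℝ] Y) (R : Z → ℝ) (hRnonneg : ∀ x, 0 ≤ R x)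
    (E : Z → Z → ℝ) (hEnonneg : ∀ x x', 0 ≤ E x x')
    (g : ℝ → ℝ) (hg0 : g 0 = 0) (hgcont : ContinuousOn g (Set.Ici (0 : ℝ)))
    (hgmono : StrictMonoOn g (Set.Ici (0 : ℝ)))
    (hgconc : ConcaveOn ℝ (Set.Ici (0 : ℝ)) g)
    (lam C : ℝ) (hlam : 0 < lam) (hlam1 : lam ≤ 1) (hC : 0 < C)
    (xdag : Z)
    (hVI : ∀ x : Z, lam * E x xdag ≤ R x - R xdag + C * g ‖A (x - xdag)‖)
    (δ : ℝ) (hδ : 0 < δ) (ydelta : Y) (hnoise : ‖ydelta - A xdag‖ ≤ δ)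
    (γ : ℝ) (hγ : 0 < γ) (xγ : Z)
    (hmin : ∀ x : Z, (1 / 2) * ‖A xγ - ydelta‖ ^ 2 + γ * R xγ ≤
        (1 / 2) * ‖A x - ydelta‖ ^ 2 + γ * R x)
    (τ₁ τ₂ : ℝ) (hτ₁ : 1 ≤ τ₁) (hτ₁₂ : τ₁ ≤ τ₂)
    (hdisc₁ : τ₁ * δ ≤ ‖A xγ - ydelta‖) (hdisc₂ : ‖A xγ - ydelta‖ ≤ τ₂ * δ) :
    lam * E xγ xdag ≤ C * (τ₂ + 1) * g δ := by
  -- R(xγ) - R(xdag) ≤ 0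
  have hAdag : ‖A xdag - ydelta‖ ≤ δ := by
    rw [← norm_neg]; simpa [neg_sub] using hnoise
  have hres : δ ≤ ‖A xγ - ydelta‖ := le_trans (by nlinarith) hdisc₁
  have hRle : R xγ - R xdag ≤ 0 := by
    have h := hmin xdag
    nlinarith [sq_nonneg ‖A xdag - ydelta‖, norm_nonneg (A xdag - ydelta),
      norm_nonneg (A xγ - ydelta)]
  -- norm bound
  have hnb : ‖A (xγ - xdag)‖ ≤ (τ₂ + 1) * δ := by
    have : A (xγ - xdag) = (A xγ - ydelta) + (ydelta - A xdag) := by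
      rw [map_sub]; abel
    rw [this]
    calc ‖(A xγ - ydelta) + (ydelta - A xdag)‖ ≤ ‖A xγ - ydelta‖ + ‖ydelta - A xdag‖ :=
          norm_add_le _ _
      _ ≤ τ₂ * δ + δ := add_le_add hdisc₂ hnoise
      _ = (τ₂ + 1) * δ := by ring
  have hτ₂1 : (1:ℝ) ≤ τ₂ + 1 := by linarith
  have hgmono' : MonotoneOn g (Set.Ici (0:ℝ)) := hgmono.monotoneOn
  have hgb : g ‖A (xγ - xdag)‖ ≤ (τ₂ + 1) * g δ := by
    calc g ‖A (xγ - xdag)‖ ≤ g ((τ₂ + 1) * δ) :=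
          hgmono' (Set.mem_Ici.2 (norm_nonneg _))
            (Set.mem_Ici.2 (by positivity)) hnb
      _ ≤ (τ₂ + 1) * g δ := concave_scale g hg0 hgconc hτ₂1 hδ.le
  calc lam * E xγ xdag ≤ R xγ - R xdag + C * g ‖A (xγ - xdag)‖ := hVI xγ
    _ ≤ C * g ‖A (xγ - xdag)‖ := by linarith
    _ ≤ C * ((τ₂ + 1) * g δ) := by
        exact mul_le_mul_of_nonneg_left hgb hC.le
    _ = C * (τ₂ + 1) * g δ := by ring
end
end

section
/- Let $x^\dagger\in\ell^1$ and assume $\sum_{k=n+1}^\infty|x_k^\dagger|\le K_1\exp(-n^{\sigma})$ and $\sum_{k=1}^n\|f^{(k)}\|_Y\le K_2 n^{\nu}$ for all $n\in\mathbb{N}$, with constants $K_1,K_2,\sigma,\nu>0$. Then $\varphi(t)=\inf_{n\in\mathbb{N}}\big(\sum_{k=n+1}^\infty|x_k^\dagger|+t\sum_{k=1}^n\|f^{(k)}\|_Y\big)$ satisfies $\varphi(t)\le C\,t\,(\log(1/t))^{\nu/\sigma}$ for all sufficiently small $t>0$ and some constant $C>0$. -/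
noncomputable section

/-- Exponential decay of solution components and power-type growth of
the `f⁽ᵏ⁾`-norms yield the near-linear bound `φ(t) ≤ C t (log(1/t))^{ν/σ}` for
small `t`. -/
theorem phi_log_rate
    {Y : Type*} [NormedAddCommGroup Y]
    (xdag : ℕ → ℝ) (hxdag1 : Memℓp xdag 1) (f : ℕ → Y)
    (K₁ K₂ σ ν : ℝ) (hK₁ : 0 < K₁) (hK₂ : 0 < K₂) (hσ : 0 < σ) (hν : 0 < ν)
    (htail : ∀ n : ℕ, 1 ≤ n →
      (∑' k : ℕ, |xdag (n + k)|) ≤ K₁ * Real.exp (-(n : ℝ) ^ σ))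
    (hgrow : ∀ n : ℕ, 1 ≤ n → (∑ k ∈ Finset.range n, ‖f k‖) ≤ K₂ * (n : ℝ) ^ ν)
    (φ : ℝ → ℝ)
    (hφ : φ = fun t => ⨅ n : ℕ,
      ((∑' k : ℕ, |xdag (n + k)|) + t * ∑ k ∈ Finset.range n, ‖f k‖)) :
    ∃ C > 0, ∃ t₀ > 0, ∀ t : ℝ, 0 < t → t ≤ t₀ →
      φ t ≤ C * t * Real.log (1 / t) ^ (ν / σ) := by
  refine ⟨K₁ + K₂ * 2 ^ ν, by positivity, Real.exp (-1), Real.exp_pos _, ?_⟩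
  intro t ht ht0
  set L := Real.log (1 / t) with hL
  have hL1 : 1 ≤ L := by
    rw [hL, one_div, Real.log_inv, le_neg]
    calc Real.log t ≤ Real.log (Real.exp (-1)) := Real.log_le_log ht ht0
    _ = -1 := Real.log_exp _
  have hLpos : 0 < L := lt_of_lt_of_le one_pos hL1
  set n : ℕ := ⌈L ^ (1 / σ)⌉₊ with hn
  have hrpos : (0:ℝ) < L ^ (1/σ) := Real.rpow_pos_of_pos hLpos _
  have hn1 : 1 ≤ n := Nat.one_le_ceil_iff.mpr hrpos
  have hge : L ^ (1/σ) ≤ (n:ℝ) := Nat.le_ceil _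
  have hr1 : (1:ℝ) ≤ L ^ (1/σ) := Real.one_le_rpow hL1 (by positivity)
  have hle : (n:ℝ) ≤ 2 * L ^ (1/σ) := by
    calc (n:ℝ) ≤ L ^ (1/σ) + 1 := le_of_lt (Nat.ceil_lt_add_one hrpos.le)
    _ ≤ 2 * L ^ (1/σ) := by linarith
  -- bound the tail
  have hnσ : L ≤ (n:ℝ) ^ σ := by
    calc L = (L ^ (1/σ)) ^ σ := by
          rw [← Real.rpow_mul hLpos.le, one_div_mul_cancel hσ.ne', Real.rpow_one]
    _ ≤ (n:ℝ) ^ σ := Real.rpow_le_rpow hrpos.le hge hσ.le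
  have hexp : Real.exp (-(n:ℝ) ^ σ) ≤ t := by
    have : Real.exp (-(n:ℝ) ^ σ) ≤ Real.exp (-L) := Real.exp_le_exp.mpr (by linarith)
    calc Real.exp (-(n:ℝ) ^ σ) ≤ Real.exp (-L) := this
    _ = t := by rw [hL, one_div, Real.log_inv, neg_neg, Real.exp_log ht]
  have htailn := htail n hn1
  have hgrown := hgrow n hn1
  -- bound the growth term
  have hnν : (n:ℝ) ^ ν ≤ 2 ^ ν * L ^ (ν/σ) := by
    calc (n:ℝ) ^ ν ≤ (2 * L ^ (1/σ)) ^ ν :=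
          Real.rpow_le_rpow (Nat.cast_nonneg n) hle hν.le
    _ = 2 ^ ν * (L ^ (1/σ)) ^ ν := Real.mul_rpow (by norm_num) hrpos.le
    _ = 2 ^ ν * L ^ (ν/σ) := by
          rw [← Real.rpow_mul hLpos.le, one_div, inv_mul_eq_div]
  have hLν : (1:ℝ) ≤ L ^ (ν/σ) := Real.one_le_rpow hL1 (by positivity)
  -- the infimum is bounded by the value at n
  have hbdd : BddBelow (Set.range fun m : ℕ =>
      ((∑' k : ℕ, |xdag (m + k)|) + t * ∑ k ∈ Finset.range m, ‖f k‖)) := by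
    refine ⟨0, ?_⟩
    rintro x ⟨m, rfl⟩
    have h1 : 0 ≤ ∑' k : ℕ, |xdag (m + k)| :=
      tsum_nonneg fun k => abs_nonneg _
    have h2 : 0 ≤ ∑ k ∈ Finset.range m, ‖f k‖ :=
      Finset.sum_nonneg fun k _ => norm_nonneg _
    positivity
  have hinf : φ t ≤ (∑' k : ℕ, |xdag (n + k)|) + t * ∑ k ∈ Finset.range n, ‖f k‖ := by
    rw [hφ]; exact ciInf_le hbdd n
  calc φ t ≤ (∑' k : ℕ, |xdag (n + k)|) + t * ∑ k ∈ Finset.range n, ‖f k‖ := hinf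
  _ ≤ K₁ * t + t * (K₂ * (2 ^ ν * L ^ (ν/σ))) := by
        gcongr
        · calc (∑' k : ℕ, |xdag (n + k)|) ≤ K₁ * Real.exp (-(n:ℝ) ^ σ) := htailn
          _ ≤ K₁ * t := by gcongr
        · calc (∑ k ∈ Finset.range n, ‖f k‖) ≤ K₂ * (n:ℝ) ^ ν := hgrown
          _ ≤ K₂ * (2 ^ ν * L ^ (ν/σ)) := by gcongr
  _ ≤ (K₁ + K₂ * 2 ^ ν) * t * L ^ (ν/σ) := by
        have h1 : K₁ * t ≤ K₁ * t * L ^ (ν/σ) := by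
          nlinarith [mul_pos hK₁ ht]
        nlinarith [mul_pos hK₁ ht]
end
end

section
/- Let $x,x^\dagger\in\ell^2$ with $x\ne x^\dagger$ and $Ax\neq Ax^\dagger$, and suppose $d(R)=d^{A^*}_{x^\dagger}(R)$ is attained at $v_R$ with $\|v_R\|_Y\le R$ for each $R>0$. Setting $t=\|A(x-x^\dagger)\|_Y>0$ and choosing $R=\Phi^{-1}(t)$ where $\Phi(R)=d(R)^2/R$ (assumed to be a continuous strictly decreasing bijection of $(0,\infty)$ onto $(0,\infty)$), one obtains $-\langle x^\dagger,x-x^\dagger\rangle_{\ell^2}\le 2\,d(\Phi^{-1}(t))^2+\tfrac14\|x-x^\dagger\|_{\ell^2}^2$. -/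
/-! Split `x† = A* v_R + u_R` with `‖v_R‖ ≤ R` and `‖u_R‖ = d(R)`. Pairing with `e = x - x†` gives
`-⟨x†, e⟩ ≤ R ‖A e‖ + d(R) ‖e‖`; Young's inequality bounds the second term by `d(R)² + ¼‖e‖²`,
and the choice `R = Φ⁻¹(‖A e‖)` is exactly the one for which `R ‖A e‖ = d(R)²`. -/

open scoped InnerProductSpace

section SourceCondition

variable {E F : Type*} [NormedAddCommGroup E] [InnerProductSpace ℝ E] [CompleteSpace E]
  [NormedAddCommGroup F] [InnerProductSpace ℝ F] [CompleteSpace F]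

theorem neg_inner_le_of_adjoint_approx (A : E →L[ℝ] F) (x e : E) (w : F) :
    -⟪x, e⟫_ℝ ≤ ‖w‖ * ‖A e‖ + ‖x - A.adjoint w‖ * ‖e‖ := by
  have hsplit : ⟪x, e⟫_ℝ = ⟪w, A e⟫_ℝ + ⟪x - A.adjoint w, e⟫_ℝ := by
    rw [← ContinuousLinearMap.adjoint_inner_left, ← inner_add_left, add_sub_cancel]
  have hw : -⟪w, A e⟫_ℝ ≤ ‖w‖ * ‖A e‖ :=
    (neg_le_abs _).trans (abs_real_inner_le_norm _ _)
  have hu : -⟪x - A.adjoint w, e⟫_ℝ ≤ ‖x - A.adjoint w‖ * ‖e‖ :=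
    (neg_le_abs _).trans (abs_real_inner_le_norm _ _)
  linarith

theorem neg_inner_le_of_adjoint_approx_young (A : E →L[ℝ] F) (x e : E) (w : F) {R : ℝ}
    (hw : ‖w‖ ≤ R) :
    -⟪x, e⟫_ℝ ≤ R * ‖A e‖ + ‖x - A.adjoint w‖ ^ 2 + 1 / 4 * ‖e‖ ^ 2 := by
  have young : ‖x - A.adjoint w‖ * ‖e‖ ≤ ‖x - A.adjoint w‖ ^ 2 + 1 / 4 * ‖e‖ ^ 2 := by
    nlinarith [sq_nonneg (‖x - A.adjoint w‖ - ‖e‖ / 2)]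
  have hRw : ‖w‖ * ‖A e‖ ≤ R * ‖A e‖ := mul_le_mul_of_nonneg_right hw (norm_nonneg _)
  linarith [neg_inner_le_of_adjoint_approx A x e w]

end SourceCondition

theorem neg_inner_le_young_balance_general
    {Y : Type*} [NormedAddCommGroup Y] [InnerProductSpace ℝ Y] [CompleteSpace Y]
    (A : lp (fun _ : ℕ => ℝ) 2 →L[ℝ] Y)
    (x xdag : lp (fun _ : ℕ => ℝ) 2) (hAxne : A x ≠ A xdag)
    (d : ℝ → ℝ)
    (v : ℝ → Y)
    (hvnorm : ∀ R : ℝ, 0 < R → ‖v R‖ ≤ R)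
    (hvatt : ∀ R : ℝ, 0 < R → ‖xdag - ContinuousLinearMap.adjoint A (v R)‖ = d R)
    (Φ : ℝ → ℝ) (hΦ : Φ = fun R => d R ^ 2 / R)
    (Ψ : ℝ → ℝ)
    (hΨ : ∀ s : ℝ, 0 < s → 0 < Ψ s ∧ Φ (Ψ s) = s) :
    -(inner ℝ xdag (x - xdag) : ℝ) ≤
      2 * d (Ψ ‖A (x - xdag)‖) ^ 2 + (1 / 4) * ‖x - xdag‖ ^ 2 := by
  have ht : 0 < ‖A (x - xdag)‖ := by
    rwa [norm_pos_iff, map_sub, sub_ne_zero]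
  obtain ⟨hR, hΦR⟩ := hΨ _ ht
  set R := Ψ ‖A (x - xdag)‖
  have hbalance : R * ‖A (x - xdag)‖ = d R ^ 2 := by
    rw [← hΦR, hΦ]
    field_simp
  have := neg_inner_le_of_adjoint_approx_young A xdag (x - xdag) (v R) (hvnorm R hR)
  rw [hvatt R hR, hbalance] at this
  linarith

/-- Let `x ≠ x†` with `Ax ≠ Ax†`, suppose the distance function
`d(R) = d^{A*}_{x†}(R)` is attained at `v_R` with `‖v_R‖ ≤ R` for each `R > 0`, and
let `Φ(R) = d(R)²/R` be a continuous strictly decreasing bijection of `(0,∞)` onto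
itself with inverse `Ψ`. Then with `t = ‖A(x - x†)‖ > 0` and `R = Ψ(t)` one obtains
`-⟨x†, x - x†⟩ ≤ 2 d(Ψ(t))² + ¼‖x - x†‖²`. -/
theorem neg_inner_le_young_balance
    {Y : Type*} [NormedAddCommGroup Y] [InnerProductSpace ℝ Y] [CompleteSpace Y]
    (A : lp (fun _ : ℕ => ℝ) 2 →L[ℝ] Y)
    (x xdag : lp (fun _ : ℕ => ℝ) 2) (hxne : x ≠ xdag) (hAxne : A x ≠ A xdag)
    (d : ℝ → ℝ)
    (hd : d = fun R =>
      sInf ((fun v : Y => ‖xdag - ContinuousLinearMap.adjoint A v‖) '' {v | ‖v‖ ≤ R}))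
    (v : ℝ → Y)
    (hvnorm : ∀ R : ℝ, 0 < R → ‖v R‖ ≤ R)
    (hvatt : ∀ R : ℝ, 0 < R → ‖xdag - ContinuousLinearMap.adjoint A (v R)‖ = d R)
    (Φ : ℝ → ℝ) (hΦ : Φ = fun R => d R ^ 2 / R)
    (hΦanti : StrictAntiOn Φ (Set.Ioi (0 : ℝ)))
    (Ψ : ℝ → ℝ)
    (hΨ : ∀ s : ℝ, 0 < s → 0 < Ψ s ∧ Φ (Ψ s) = s) :
    -(inner ℝ xdag (x - xdag) : ℝ) ≤
      2 * d (Ψ ‖A (x - xdag)‖) ^ 2 + (1 / 4) * ‖x - xdag‖ ^ 2 :=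
  neg_inner_le_young_balance_general A x xdag hAxne d v hvnorm hvatt Φ hΦ Ψ hΨ
end
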